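/- Let p be an odd prime, q = p^m, u a positive integer, v = gcd(m, u), and suppose m/v ≡ 0 (mod 4). Then the kernel of the F_p-linear map x ↦ x^(p^(2u)) + x on F_q has exactly p^(2v) elements. -/

import Mathlib

/-!
A nonzero `x` lies in the kernel iff `x ^ d = -1`, where `d = p ^ (2u) - 1`. In the cyclic group
`Fˣ` of order `q - 1` this fibre of `x ↦ x ^ d`, once nonempty, is a coset of the kernel, which has
`gcd (d, q - 1) = p ^ gcd (2u, m) - 1 = p ^ (2v) - 1` elements. With `n = p ^ (2v) - 1`, the
quotients `(q - 1) / n` and `d / n` are geometric sums in the odd number `p ^ (2v)` with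
`m / (2v)` (even) and `u / v` (odd) terms. Hence `Fˣ` has an element `y` with `y ^ n = -1`, and then
`y ^ d = -1`.
-/

open Finset

theorem Odd.even_geom_sum_iff {a : ℕ} (ha : Odd a) (k : ℕ) :
    Even (∑ i ∈ range k, a ^ i) ↔ Even k := by
  induction k with
  | zero => simp
  | succ k ih =>
    simp [sum_range_succ, Nat.even_add, ih, Nat.even_add_one, Nat.not_even_iff_odd.mpr ha.pow]

theorem Odd.exists_pow_sub_one_eq_mul {a : ℕ} (ha : Odd a) (k : ℕ) :
    ∃ s, a ^ k - 1 = (a - 1) * s ∧ (Even s ↔ Even k) :=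
  ⟨∑ i ∈ range k, a ^ i, by rw [mul_comm, geom_sum_mul_of_one_le ha.pos], ha.even_geom_sum_iff k⟩

theorem Nat.gcd_two_mul_left_eq {m u : ℕ} (h : 2 * m.gcd u ∣ m) :
    (2 * u).gcd m = 2 * m.gcd u := by
  apply Nat.dvd_antisymm
  · rw [← Nat.gcd_mul_left]
    exact Nat.dvd_gcd ((Nat.gcd_dvd_right _ _).trans (dvd_mul_left m 2)) (Nat.gcd_dvd_left _ _)
  · exact Nat.dvd_gcd (mul_dvd_mul_left 2 (Nat.gcd_dvd_right m u)) h

theorem Nat.odd_div_gcd_of_even_div_gcd {m u : ℕ} (hm : 0 < m) (h : Even (m / m.gcd u)) :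
    Odd (u / m.gcd u) :=
  ((Nat.coprime_div_gcd_div_gcd (Nat.gcd_pos_of_pos_left u hm)).coprime_dvd_left
    (even_iff_two_dvd.mp h)).odd_of_left

theorem IsCyclic.card_pow_eq_of_exists {G : Type*} [CommGroup G] [IsCyclic G] [Fintype G]
    [DecidableEq G] {d : ℕ} {c : G} (hc : ∃ y, y ^ d = c) :
    #{x | x ^ d = c} = (Nat.card G).gcd d := by
  have hfiber := MonoidHom.card_fiber_eq_of_mem_range (powMonoidHom d) hc ⟨1, one_pow d⟩
  simp only [powMonoidHom_apply] at hfiber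
  rw [hfiber, ← IsCyclic.card_powMonoidHom_ker, Nat.card_eq_fintype_card, Fintype.card_subtype]
  simp [MonoidHom.mem_ker]

namespace FiniteField

variable {K : Type*} [Field K] [Fintype K]

theorem exists_pow_eq_neg_one {n : ℕ} (h : 2 * n ∣ Fintype.card K - 1) :
    ∃ y : Kˣ, y ^ n = -1 := by
  classical
  obtain ⟨g, hg⟩ := IsCyclic.exists_ofOrder_eq_natCard (α := Kˣ)
  rw [Nat.card_eq_fintype_card, Fintype.card_units] at hg
  obtain ⟨c, hc⟩ := h
  rw [show 2 * n * c = 2 * (c * n) by ring] at hc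
  have hcn : 0 < c * n := by
    have := Nat.sub_pos_of_lt (Fintype.one_lt_card (α := K))
    omega
  refine ⟨g ^ c, Units.ext ?_⟩
  have hz : orderOf (((g ^ c) ^ n : Kˣ) : K) = 2 := by
    rw [orderOf_units, ← pow_mul, orderOf_pow' _ hcn.ne', hg, hc,
      Nat.gcd_eq_right (dvd_mul_left _ _), Nat.mul_div_cancel _ hcn]
  obtain ⟨hz2, hz1⟩ := orderOf_eq_prime_iff.mp hz
  exact (sq_eq_one_iff.mp hz2).resolve_left hz1

variable [DecidableEq K]

theorem card_filter_pow_succ_add_eq_zero {d : ℕ} (hd : ∃ y : Kˣ, y ^ d = -1) :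
    #{x : K | x ^ (d + 1) + x = 0} = (Fintype.card K - 1).gcd d + 1 := by
  have hsplit : ({x : K | x ^ (d + 1) + x = 0} : Finset K) =
      insert 0 (({x : Kˣ | x ^ d = -1} : Finset Kˣ).map ⟨Units.val, Units.val_injective⟩) := by
    ext x
    simp only [mem_filter, mem_univ, true_and, mem_insert, mem_map, Function.Embedding.coeFn_mk]
    rw [pow_succ', ← mul_add_one, mul_eq_zero, add_eq_zero_iff_eq_neg]
    refine or_congr_right' fun hx => ⟨fun h => ⟨Units.mk0 x hx, Units.ext ?_, rfl⟩, ?_⟩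
    · simpa using h
    · rintro ⟨y, hy, rfl⟩
      simpa using congrArg Units.val hy
  rw [hsplit, card_insert_of_notMem (by simp), card_map, IsCyclic.card_pow_eq_of_exists hd,
    Nat.card_eq_fintype_card, Fintype.card_units]

end FiniteField

open scoped Classical in
theorem stmt_9_general (p m u : ℕ) (hp : Odd p) (hm : 0 < m)
    (v : ℕ) (hv : v = Nat.gcd m u) (h4 : m / v % 4 = 0)
    (F : Type*) [Field F] [Fintype F]
    (hF : Fintype.card F = p ^ m) :
    (Finset.univ.filter (fun x : F =>
        x ^ p ^ (2 * u) + x = 0)).card = p ^ (2 * v) := by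
  obtain ⟨k, hk⟩ : 4 ∣ m / v := Nat.dvd_of_mod_eq_zero h4
  have hmk : m = 2 * v * (2 * k) := by
    rw [← Nat.div_mul_cancel (hv ▸ Nat.gcd_dvd_left m u : v ∣ m), hk]; ring
  have huv : 2 * u = 2 * v * (u / v) := by
    rw [mul_assoc, Nat.mul_div_cancel' (hv ▸ Nat.gcd_dvd_right m u)]
  have hodd : Odd (u / v) := hv ▸ Nat.odd_div_gcd_of_even_div_gcd hm (hv ▸ ⟨2 * k, by omega⟩)
  have hgcd : (2 * u).gcd m = 2 * v := by
    rw [hv] at hmk ⊢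
    exact Nat.gcd_two_mul_left_eq ⟨2 * k, hmk⟩
  have hpv : Odd (p ^ (2 * v)) := hp.pow
  obtain ⟨s, hs, hs_even⟩ := hpv.exists_pow_sub_one_eq_mul (2 * k)
  obtain ⟨t, ht, ht_even⟩ := hpv.exists_pow_sub_one_eq_mul (u / v)
  obtain ⟨y, hy⟩ : ∃ y : Fˣ, y ^ (p ^ (2 * v) - 1) = -1 := by
    obtain ⟨s', rfl⟩ := hs_even.mpr (even_two_mul k)
    refine FiniteField.exists_pow_eq_neg_one ⟨s', ?_⟩
    rw [hF, hmk, pow_mul, hs]; ring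
  have hneg : ∃ x : Fˣ, x ^ (p ^ (2 * u) - 1) = -1 := by
    refine ⟨y, ?_⟩
    rw [huv, pow_mul, ht, pow_mul, hy, Odd.neg_one_pow]
    exact Nat.not_even_iff_odd.mp (ht_even.not.mpr (Nat.not_even_iff_odd.mpr hodd))
  classical
  have hcard := FiniteField.card_filter_pow_succ_add_eq_zero hneg
  rw [Nat.sub_add_cancel (Nat.one_le_pow _ _ hp.pos), hF, Nat.pow_sub_one_gcd_pow_sub_one,
    Nat.gcd_comm, hgcd, Nat.sub_add_cancel hpv.pos] at hcard
  convert hcard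

open scoped Classical in
theorem stmt_9 (p m u : ℕ) [Fact p.Prime] (hp : Odd p) (hm : 0 < m) (hu : 0 < u)
    (v : ℕ) (hv : v = Nat.gcd m u) (h4 : m / v % 4 = 0)
    (F : Type*) [Field F] [Fintype F] [Algebra (ZMod p) F]
    (hF : Fintype.card F = p ^ m) :
    (Finset.univ.filter (fun x : F =>
        x ^ p ^ (2 * u) + x = 0)).card = p ^ (2 * v) :=
  stmt_9_general p m u hp hm v hv h4 F hF
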